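/- arXiv:1203.6799 — 3 statements merged into one kernel-verified Lean document; each statement's English description precedes it below -/
import Mathlib

section
/- Generalized Hölder inequality in variable exponent Lebesgue spaces: let (Ω, μ) be a measure space and let q : Ω → ℝ be measurable with 1 < q⁻ := ess inf q ≤ q⁺ := ess sup q < ∞, and let q'(x) := q(x)/(q(x)−1) be the pointwise conjugate exponent. Then for all measurable f, g : Ω → ℝ one has ∫_Ω |f(x) g(x)| dμ(x) ≤ 2 ‖f‖_{q(·)} ‖g‖_{q'(·)}. -/
open MeasureTheory Filter
open scoped ENNReal

/-- The variable-exponent semimodular `A_q(f) = ∫_Ω |f(x)|^{q(x)} dμ(x)`. -/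
noncomputable def semimodular {Ω : Type*} [MeasurableSpace Ω] (μ : Measure Ω)
    (q : Ω → ℝ) (f : Ω → ℝ) : ℝ≥0∞ :=
  ∫⁻ x, ENNReal.ofReal |f x| ^ q x ∂μ

/-- The Luxemburg norm `‖f‖_{q(·)} = inf { λ > 0 : A_q(f/λ) ≤ 1 }`, with `inf ∅ = ∞`. -/
noncomputable def luxNorm {Ω : Type*} [MeasurableSpace Ω] (μ : Measure Ω)
    (q : Ω → ℝ) (f : Ω → ℝ) : ℝ≥0∞ :=
  sInf ((fun lam : ℝ => ENNReal.ofReal lam) ''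
    {lam : ℝ | 0 < lam ∧ semimodular μ q (fun x => f x / lam) ≤ 1})

/-!
Pointwise Young's inequality `st ≤ s^q + t^{q'}` (the factors `1/q, 1/q'` are simply dropped,
which costs the constant `2`), applied to `f/a` and `g/b` for admissible `a, b` in the
definitions of `‖f‖_{q(·)}` and `‖g‖_{q'(·)}`, integrates to `∫ |fg| ≤ 2ab`; then take the
infimum over `a` and `b`. Since `0 · ∞ = 0` in `ℝ≥0∞`, the infimum step needs both norms to be
nonzero; a vanishing Luxemburg norm forces the function to vanish a.e., because
`A_q(f) ≤ λ A_q(f/λ)` for `0 < λ ≤ 1` when `q ≥ 1`.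
-/

theorem Real.mul_le_rpow_add_rpow {s t p p' : ℝ} (hs : 0 ≤ s) (ht : 0 ≤ t)
    (hp : p.HolderConjugate p') : s * t ≤ s ^ p + t ^ p' :=
  (Real.young_inequality_of_nonneg hs ht hp).trans <|
    add_le_add (div_le_self (Real.rpow_nonneg hs _) hp.lt.le)
      (div_le_self (Real.rpow_nonneg ht _) hp.symm.lt.le)

theorem ENNReal.ofReal_abs_mul_le_ofReal_mul_mul_rpow_add_rpow {s t p a b : ℝ} (hp : 1 < p)
    (ha : 0 < a) (hb : 0 < b) :
    ENNReal.ofReal |s * t| ≤ ENNReal.ofReal (a * b) *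
      (ENNReal.ofReal |s / a| ^ p + ENNReal.ofReal |t / b| ^ (p / (p - 1))) := by
  have hp' : 0 ≤ p / (p - 1) := (Real.HolderConjugate.conjExponent hp).symm.nonneg
  calc ENNReal.ofReal |s * t|
      = ENNReal.ofReal (a * b * (|s / a| * |t / b|)) := by
        rw [abs_mul, abs_div, abs_div, abs_of_pos ha, abs_of_pos hb]
        congr 1
        field_simp
    _ ≤ ENNReal.ofReal (a * b * (|s / a| ^ p + |t / b| ^ (p / (p - 1)))) := by
        gcongr
        exact Real.mul_le_rpow_add_rpow (abs_nonneg _) (abs_nonneg _)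
          (Real.HolderConjugate.conjExponent hp)
    _ = _ := by
        rw [ENNReal.ofReal_mul (by positivity), ENNReal.ofReal_add (by positivity) (by positivity),
          ENNReal.ofReal_rpow_of_nonneg (abs_nonneg _) (by linarith),
          ENNReal.ofReal_rpow_of_nonneg (abs_nonneg _) hp']

section

variable {Ω : Type*} [MeasurableSpace Ω] {μ : Measure Ω}

/-- The `essInf` of a real function that is not a.e. bounded below is the junk value `0`, so a
nonnegative strict lower bound on it is genuine. -/
theorem ae_lt_of_nonneg_lt_essInf {q : Ω → ℝ} {c : ℝ} (hc : 0 ≤ c) (h : c < essInf q μ) :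
    ∀ᵐ x ∂μ, c < q x := by
  refine ae_lt_of_lt_essInf h ?_
  by_contra hq
  rw [essInf, Real.liminf_of_not_isBoundedUnder hq] at h
  exact h.not_ge hc

variable {q : Ω → ℝ} {f g : Ω → ℝ}

theorem semimodular_le_ofReal_mul_semimodular_div (hq : ∀ᵐ x ∂μ, 1 ≤ q x) {lam : ℝ}
    (h0 : 0 < lam) (h1 : lam ≤ 1) :
    semimodular μ q f ≤ ENNReal.ofReal lam * semimodular μ q (fun x => f x / lam) := by
  rw [semimodular, semimodular, ← lintegral_const_mul' _ _ ENNReal.ofReal_ne_top]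
  refine lintegral_mono_ae ?_
  filter_upwards [hq] with x hx
  calc ENNReal.ofReal |f x| ^ q x
      = (ENNReal.ofReal lam * ENNReal.ofReal |f x / lam|) ^ q x := by
        rw [← ENNReal.ofReal_mul h0.le, abs_div, abs_of_pos h0, mul_div_cancel₀ _ h0.ne']
    _ = ENNReal.ofReal lam ^ q x * ENNReal.ofReal |f x / lam| ^ q x :=
        ENNReal.mul_rpow_of_nonneg _ _ (zero_le_one.trans hx)
    _ ≤ ENNReal.ofReal lam ^ (1 : ℝ) * ENNReal.ofReal |f x / lam| ^ q x :=
        mul_le_mul_left (ENNReal.rpow_le_rpow_of_exponent_ge (ENNReal.ofReal_le_one.2 h1) hx) _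
    _ = ENNReal.ofReal lam * ENNReal.ofReal |f x / lam| ^ q x := by rw [ENNReal.rpow_one]

theorem semimodular_le_luxNorm (hq : ∀ᵐ x ∂μ, 1 ≤ q x) (h : luxNorm μ q f < 1) :
    semimodular μ q f ≤ luxNorm μ q f := by
  refine le_of_forall_gt_imp_ge_of_dense fun c hc => ?_
  obtain ⟨_, ⟨lam, ⟨hlam0, hlam⟩, rfl⟩, hlt⟩ := sInf_lt_iff.1 (lt_min hc h)
  obtain ⟨hlamc, hlam1⟩ := lt_min_iff.1 hlt
  calc semimodular μ q f
      ≤ ENNReal.ofReal lam * semimodular μ q (fun x => f x / lam) :=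
        semimodular_le_ofReal_mul_semimodular_div hq hlam0 (ENNReal.ofReal_lt_one.1 hlam1).le
    _ ≤ ENNReal.ofReal lam := mul_le_of_le_one_right' hlam
    _ ≤ c := hlamc.le

theorem ae_eq_zero_of_luxNorm_eq_zero (hq : Measurable q) (hq1 : ∀ᵐ x ∂μ, 1 ≤ q x)
    (hf : Measurable f) (h : luxNorm μ q f = 0) : f =ᵐ[μ] 0 := by
  have hA : semimodular μ q f = 0 :=
    nonpos_iff_eq_zero.1 (h ▸ semimodular_le_luxNorm hq1 (h ▸ zero_lt_one))
  rw [semimodular, lintegral_eq_zero_iff (hf.abs.ennreal_ofReal.pow hq)] at hA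
  filter_upwards [hA, hq1] with x hx hx1
  simpa [ENNReal.rpow_eq_zero_iff, zero_lt_one.trans_le hx1, not_lt.2 (zero_le_one.trans hx1)]
    using hx

theorem lintegral_ofReal_abs_mul_eq_zero (h : f =ᵐ[μ] 0 ∨ g =ᵐ[μ] 0) :
    ∫⁻ x, ENNReal.ofReal |f x * g x| ∂μ = 0 := by
  rw [← lintegral_zero (μ := μ)]
  refine lintegral_congr_ae ?_
  rcases h with h | h <;> filter_upwards [h] with x hx <;> simp [hx]

theorem lintegral_ofReal_abs_mul_le_of_semimodular_le_one (hq : Measurable q)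
    (hq1 : ∀ᵐ x ∂μ, 1 < q x) (hf : Measurable f) {a b : ℝ} (ha : 0 < a) (hb : 0 < b)
    (hfa : semimodular μ q (fun x => f x / a) ≤ 1)
    (hgb : semimodular μ (fun x => q x / (q x - 1)) (fun x => g x / b) ≤ 1) :
    ∫⁻ x, ENNReal.ofReal |f x * g x| ∂μ ≤ 2 * (ENNReal.ofReal a * ENNReal.ofReal b) :=
  calc ∫⁻ x, ENNReal.ofReal |f x * g x| ∂μ
      ≤ ∫⁻ x, ENNReal.ofReal (a * b) * (ENNReal.ofReal |f x / a| ^ q x +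
          ENNReal.ofReal |g x / b| ^ (q x / (q x - 1))) ∂μ :=
        lintegral_mono_ae <| hq1.mono fun x hx =>
          ENNReal.ofReal_abs_mul_le_ofReal_mul_mul_rpow_add_rpow hx ha hb
    _ = ENNReal.ofReal (a * b) * (semimodular μ q (fun x => f x / a) +
          semimodular μ (fun x => q x / (q x - 1)) (fun x => g x / b)) := by
        rw [lintegral_const_mul' _ _ ENNReal.ofReal_ne_top,
          lintegral_add_left ((hf.div_const a).abs.ennreal_ofReal.pow hq)]
        rfl
    _ ≤ ENNReal.ofReal (a * b) * (1 + 1) := by gcongr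
    _ = 2 * (ENNReal.ofReal a * ENNReal.ofReal b) := by
        rw [ENNReal.ofReal_mul ha.le, one_add_one_eq_two, mul_comm]

theorem luxNorm_eq_iInf :
    luxNorm μ q f = ⨅ lam : {lam : ℝ | 0 < lam ∧ semimodular μ q (fun x => f x / lam) ≤ 1},
      ENNReal.ofReal lam :=
  sInf_image'

theorem lintegral_ofReal_abs_mul_le_two_mul_luxNorm_mul_luxNorm_of_ne_zero (hq : Measurable q)
    (hq1 : ∀ᵐ x ∂μ, 1 < q x) (hf : Measurable f) (hf0 : luxNorm μ q f ≠ 0)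
    (hg0 : luxNorm μ (fun x => q x / (q x - 1)) g ≠ 0) :
    ∫⁻ x, ENNReal.ofReal |f x * g x| ∂μ ≤
      2 * luxNorm μ q f * luxNorm μ (fun x => q x / (q x - 1)) g := by
  rcases eq_or_ne (luxNorm μ q f) ∞ with hftop | hftop
  · rw [hftop, ENNReal.mul_top two_ne_zero, ENNReal.top_mul hg0]
    exact le_top
  rcases eq_or_ne (luxNorm μ (fun x => q x / (q x - 1)) g) ∞ with hgtop | hgtop
  · rw [hgtop, ENNReal.mul_top (mul_ne_zero two_ne_zero hf0)]
    exact le_top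
  rw [luxNorm_eq_iInf] at hftop hgtop
  rw [luxNorm_eq_iInf, luxNorm_eq_iInf, ENNReal.mul_iInf_of_ne two_ne_zero ENNReal.ofNat_ne_top]
  obtain ⟨a₀, -⟩ := not_forall.1 (mt iInf_eq_top.2 hftop)
  obtain ⟨b₀, -⟩ := not_forall.1 (mt iInf_eq_top.2 hgtop)
  refine ENNReal.le_iInf_mul_iInf
    ⟨a₀, ENNReal.mul_ne_top ENNReal.ofNat_ne_top ENNReal.ofReal_ne_top⟩
    ⟨b₀, ENNReal.ofReal_ne_top⟩ fun a b => ?_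
  rw [mul_assoc]
  exact lintegral_ofReal_abs_mul_le_of_semimodular_le_one hq hq1 hf a.2.1 b.2.1 a.2.2 b.2.2

end

theorem generalized_holder_inequality_general
    {Ω : Type*} [MeasurableSpace Ω] (μ : Measure Ω)
    (q : Ω → ℝ) (hq : Measurable q)
    (h1 : 1 < essInf q μ)
    (f g : Ω → ℝ) (hf : Measurable f) (hg : Measurable g) :
    ∫⁻ x, ENNReal.ofReal |f x * g x| ∂μ ≤
      2 * luxNorm μ q f * luxNorm μ (fun x => q x / (q x - 1)) g := by
  have hq1 : ∀ᵐ x ∂μ, 1 < q x := ae_lt_of_nonneg_lt_essInf zero_le_one h1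
  have hq'1 : ∀ᵐ x ∂μ, 1 ≤ q x / (q x - 1) :=
    hq1.mono fun x hx => (Real.HolderConjugate.conjExponent hx).symm.lt.le
  by_cases h0 : luxNorm μ q f = 0 ∨ luxNorm μ (fun x => q x / (q x - 1)) g = 0
  · rw [lintegral_ofReal_abs_mul_eq_zero <| h0.imp
      (ae_eq_zero_of_luxNorm_eq_zero hq (hq1.mono fun _ => le_of_lt) hf)
      (ae_eq_zero_of_luxNorm_eq_zero (hq.div (hq.sub_const 1)) hq'1 hg)]
    exact zero_le
  obtain ⟨hf0, hg0⟩ := not_or.1 h0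
  exact lintegral_ofReal_abs_mul_le_two_mul_luxNorm_mul_luxNorm_of_ne_zero hq hq1 hf hf0 hg0

/-- Generalized Hölder inequality in variable exponent Lebesgue spaces:
if `1 < q⁻ = essInf q ≤ q⁺ = essSup q < ∞` and `q'(x) = q(x)/(q(x)-1)` is the pointwise
conjugate exponent, then `∫ |f g| dμ ≤ 2 ‖f‖_{q(·)} ‖g‖_{q'(·)}`. -/
theorem generalized_holder_inequality
    {Ω : Type*} [MeasurableSpace Ω] (μ : Measure Ω)
    (q : Ω → ℝ) (hq : Measurable q)
    (hbdd : IsBoundedUnder (· ≤ ·) (ae μ) q)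
    (h1 : 1 < essInf q μ) (h12 : essInf q μ ≤ essSup q μ)
    (f g : Ω → ℝ) (hf : Measurable f) (hg : Measurable g) :
    ∫⁻ x, ENNReal.ofReal |f x * g x| ∂μ ≤
      2 * luxNorm μ q f * luxNorm μ (fun x => q x / (q x - 1)) g :=
  generalized_holder_inequality_general μ q hq h1 f g hf hg
end

section
/- Let N ≥ 1 and γ ∈ (1,∞). There exists a constant C = C(N, γ) such that for every f ∈ L^γ(ℝ^N) and every j ∈ ℕ there exists λ ∈ [2^(2^j), 2^(2^(j+1))) with λ^γ · L_N({x ∈ ℝ^N : M(|f|)(x) > 2λ}) ≤ C · 2^{−j} · ∫_{ℝ^N} |f|^γ dx, where L_N denotes N-dimensional Lebesgue measure. -/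
/-!
The maximal function is of weak type `(1,1)`: `t · |{M g > t}| ≤ 4 ^ N ∫ |g|`, by the Vitali
covering lemma (when `∫ |g| < ∞` the radii of the balls witnessing `M g > t` are bounded). Since
`M` is subadditive and `M (g 1_{|g| ≤ λ}) ≤ λ`, we get `{M g > 2λ} ⊆ {M (g 1_{|g| > λ}) > λ}`,
hence `λ ^ γ |{M g > 2λ}| ≤ 4 ^ N λ ^ (γ - 1) ∫_{|g| > λ} |g|`. Summing over the `2 ^ j` levels
`λ = 2 ^ k`, `2 ^ j ≤ k < 2 ^ (j + 1)`, the weights `λ ^ (γ - 1)` with `λ < |g y|` form a geometric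
series bounded by `2 ^ (γ - 1) / (2 ^ (γ - 1) - 1) · |g y| ^ (γ - 1)`, so the sum is at most
`C ∫ |g| ^ γ`, and the smallest of its `2 ^ j` terms is at most `C 2 ^ (-j) ∫ |g| ^ γ`.
-/

open MeasureTheory Filter
open scoped ENNReal

/-- The centered Hardy–Littlewood maximal function of `|f|` on `ℝ^N`. -/
noncomputable def maxFn {N : ℕ} (f : EuclideanSpace ℝ (Fin N) → ℝ)
    (x : EuclideanSpace ℝ (Fin N)) : ℝ≥0∞ :=
  ⨆ (R : ℝ) (_ : 0 < R),
    (volume (Metric.ball x R))⁻¹ * ∫⁻ y in Metric.ball x R, ENNReal.ofReal |f y|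

open Metric MeasureTheory.Measure

theorem sum_pow_le_of_forall_pow_le {q b : ℝ} (hq : 1 < q) (hb : 0 ≤ b) {S : Finset ℕ}
    (hS : ∀ k ∈ S, q ^ k ≤ b) : ∑ k ∈ S, q ^ k ≤ q / (q - 1) * b := by
  have hq1 : 0 < q - 1 := sub_pos.2 hq
  rcases S.eq_empty_or_nonempty with rfl | hne
  · rw [Finset.sum_empty]
    exact mul_nonneg (div_pos (by linarith) hq1).le hb
  set m := S.max' hne
  calc ∑ k ∈ S, q ^ k ≤ ∑ k ∈ Finset.range (m + 1), q ^ k :=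
        Finset.sum_le_sum_of_subset_of_nonneg
          (fun k hk => Finset.mem_range.2 (Nat.lt_succ_of_le (S.le_max' k hk)))
          (fun _ _ _ => by positivity)
    _ = (q ^ (m + 1) - 1) / (q - 1) := geom_sum_eq hq.ne' _
    _ ≤ q / (q - 1) * q ^ m := by
        rw [div_mul_eq_mul_div, pow_succ']
        gcongr
        linarith
    _ ≤ q / (q - 1) * b := by
        gcongr
        exact hS m (S.max'_mem hne)

theorem sum_ofReal_two_pow_rpow_mul_ite_le {γ : ℝ} (hγ : 1 < γ) (T : Finset ℕ) {a : ℝ}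
    (ha : 0 ≤ a) :
    ∑ k ∈ T, ENNReal.ofReal (((2 : ℝ) ^ k) ^ (γ - 1)) *
        (if (2 : ℝ) ^ k < a then ENNReal.ofReal a else 0) ≤
      ENNReal.ofReal (2 ^ (γ - 1) / (2 ^ (γ - 1) - 1)) * ENNReal.ofReal a ^ γ := by
  set q : ℝ := 2 ^ (γ - 1)
  have hq : 1 < q := Real.one_lt_rpow one_lt_two (by linarith)
  have hpow : ∀ k : ℕ, ((2 : ℝ) ^ k) ^ (γ - 1) = q ^ k := fun k =>
    (Real.rpow_pow_comm zero_le_two _ k).symm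
  have hS : ∀ k ∈ T.filter (fun k => (2 : ℝ) ^ k < a), q ^ k ≤ a ^ (γ - 1) := by
    intro k hk
    rw [← hpow]
    exact Real.rpow_le_rpow (by positivity) (Finset.mem_filter.1 hk).2.le (by linarith)
  calc ∑ k ∈ T, ENNReal.ofReal (((2 : ℝ) ^ k) ^ (γ - 1)) *
          (if (2 : ℝ) ^ k < a then ENNReal.ofReal a else 0)
      = ∑ k ∈ T.filter (fun k => (2 : ℝ) ^ k < a), ENNReal.ofReal (q ^ k) * ENNReal.ofReal a := by
        simp only [mul_ite, mul_zero, hpow, Finset.sum_filter]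
    _ = ENNReal.ofReal (∑ k ∈ T.filter (fun k => (2 : ℝ) ^ k < a), q ^ k) * ENNReal.ofReal a := by
        rw [← Finset.sum_mul, ENNReal.ofReal_sum_of_nonneg fun _ _ => by positivity]
    _ ≤ ENNReal.ofReal (q / (q - 1) * a ^ (γ - 1)) * ENNReal.ofReal a := by
        gcongr
        exact sum_pow_le_of_forall_pow_le hq (by positivity) hS
    _ = ENNReal.ofReal (q / (q - 1)) * ENNReal.ofReal a ^ γ := by
        rw [ENNReal.ofReal_rpow_of_nonneg ha (by linarith), ← ENNReal.ofReal_mul (by positivity),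
          ← ENNReal.ofReal_mul (div_pos (by linarith) (by linarith)).le, mul_assoc,
          ← Real.rpow_add_one' ha (by linarith), sub_add_cancel]

section AddHaar

variable {E : Type*} [NormedAddCommGroup E] [NormedSpace ℝ E] [FiniteDimensional ℝ E]
  [Nontrivial E] [MeasurableSpace E] [BorelSpace E] (μ : Measure E) [μ.IsAddHaarMeasure]

theorem exists_radius_le_of_measure_ball_le {B : ℝ≥0∞} (hB : B ≠ ∞) :
    ∃ R, ∀ x r, 0 < r → μ (ball x r) ≤ B → r ≤ R := by
  set c := μ (ball (0 : E) 1)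
  have hc0 : c ≠ 0 := (measure_ball_pos μ _ one_pos).ne'
  have hctop : c ≠ ∞ := measure_ball_lt_top.ne
  refine ⟨max 1 (B / c).toReal, fun x r hr hrB => ?_⟩
  rcases le_or_gt r 1 with h1 | h1
  · exact le_max_of_le_left h1
  have hpow : ENNReal.ofReal (r ^ Module.finrank ℝ E) ≤ B / c := by
    rw [ENNReal.le_div_iff_mul_le (Or.inl hc0) (Or.inl hctop), ← addHaar_ball μ x hr.le]
    exact hrB
  calc r = r ^ 1 := (pow_one r).symm
    _ ≤ r ^ Module.finrank ℝ E := pow_le_pow_right₀ h1.le Module.finrank_pos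
    _ ≤ (B / c).toReal := (ENNReal.ofReal_le_iff_le_toReal (ENNReal.div_ne_top hB hc0)).1 hpow
    _ ≤ _ := le_max_right _ _

theorem measure_closedBall_four_mul (x : E) (r : ℝ) :
    μ (closedBall x (4 * r)) = 4 ^ Module.finrank ℝ E * μ (ball x r) := by
  rw [addHaar_closedBall_eq_addHaar_ball, addHaar_ball_mul μ x zero_le_four,
    ← addHaar_ball_center μ x, ENNReal.ofReal_pow zero_le_four, ENNReal.ofReal_ofNat]

theorem mul_measure_le_of_forall_ball {s : Set E} {r : E → ℝ} {R : ℝ} (hr0 : ∀ x ∈ s, 0 < r x)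
    (hrR : ∀ x ∈ s, r x ≤ R) {t : ℝ≥0∞} {φ : E → ℝ≥0∞}
    (hφ : ∀ x ∈ s, t * μ (ball x (r x)) ≤ ∫⁻ y in ball x (r x), φ y ∂μ) :
    t * μ s ≤ 4 ^ Module.finrank ℝ E * ∫⁻ y, φ y ∂μ := by
  obtain ⟨u, hus, hdisj, hcover⟩ :=
    Vitali.exists_disjoint_subfamily_covering_enlargement_closedBall s id r R hrR 4 (by norm_num)
  have hdisj' : u.PairwiseDisjoint fun x => ball x (r x) :=
    hdisj.mono fun _ => ball_subset_closedBall
  have hu : u.Countable := hdisj'.countable_of_isOpen (fun _ _ => isOpen_ball)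
    fun x hx => nonempty_ball.2 (hr0 x (hus hx))
  have hs : s ⊆ ⋃ x ∈ u, closedBall x (4 * r x) := fun y hy => by
    obtain ⟨x, hx, hsub⟩ := hcover y hy
    exact Set.mem_biUnion hx (hsub (mem_closedBall_self (hr0 y hy).le))
  calc t * μ s ≤ t * ∑' x : u, μ (closedBall x (4 * r x)) := by
        gcongr
        exact (measure_mono hs).trans (measure_biUnion_le μ hu _)
    _ = 4 ^ Module.finrank ℝ E * ∑' x : u, t * μ (ball x (r x)) := by
        rw [← ENNReal.tsum_mul_left, ← ENNReal.tsum_mul_left]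
        refine tsum_congr fun x => ?_
        rw [measure_closedBall_four_mul μ, mul_left_comm]
    _ ≤ 4 ^ Module.finrank ℝ E * ∑' x : u, ∫⁻ y in ball x (r x), φ y ∂μ := by
        gcongr with x
        exact hφ x (hus x.2)
    _ = 4 ^ Module.finrank ℝ E * ∫⁻ y in ⋃ x ∈ u, ball x (r x), φ y ∂μ := by
        rw [lintegral_biUnion hu (fun _ _ => measurableSet_ball) hdisj']
    _ ≤ 4 ^ Module.finrank ℝ E * ∫⁻ y, φ y ∂μ :=
        mul_le_mul_right (setLIntegral_le_lintegral _ _) _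

end AddHaar

section MaximalFunction

variable {N : ℕ}

theorem maxFn_congr_ae {f g : EuclideanSpace ℝ (Fin N) → ℝ} (h : f =ᵐ[volume] g) :
    maxFn f = maxFn g := by
  funext x
  refine iSup_congr fun R => iSup_congr fun _ =>
    congrArg _ (lintegral_congr_ae (ae_restrict_of_ae ?_))
  filter_upwards [h] with y hy
  rw [hy]

theorem maxFn_le_of_abs_le {g : EuclideanSpace ℝ (Fin N) → ℝ} {c : ℝ} (hg : ∀ y, |g y| ≤ c)
    (x : EuclideanSpace ℝ (Fin N)) : maxFn g x ≤ ENNReal.ofReal c := by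
  refine iSup₂_le fun R _ => ?_
  calc (volume (ball x R))⁻¹ * ∫⁻ y in ball x R, ENNReal.ofReal |g y|
      ≤ (volume (ball x R))⁻¹ * (ENNReal.ofReal c * volume (ball x R)) := by
        gcongr
        exact (lintegral_mono fun y => ENNReal.ofReal_le_ofReal (hg y)).trans_eq
          (setLIntegral_const _ _)
    _ ≤ ENNReal.ofReal c := by
        rw [mul_left_comm]
        exact mul_le_of_le_one_right' (ENNReal.inv_mul_le_one _)

theorem maxFn_add_le {g : EuclideanSpace ℝ (Fin N) → ℝ} (hg : Measurable g)
    (h : EuclideanSpace ℝ (Fin N) → ℝ) (x : EuclideanSpace ℝ (Fin N)) :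
    maxFn (g + h) x ≤ maxFn g x + maxFn h x := by
  refine iSup₂_le fun R hR => ?_
  calc (volume (ball x R))⁻¹ * ∫⁻ y in ball x R, ENNReal.ofReal |(g + h) y|
      ≤ (volume (ball x R))⁻¹ *
          ∫⁻ y in ball x R, (ENNReal.ofReal |g y| + ENNReal.ofReal |h y|) := by
        gcongr with y
        rw [← ENNReal.ofReal_add (abs_nonneg _) (abs_nonneg _)]
        exact ENNReal.ofReal_le_ofReal (abs_add_le _ _)
    _ = (volume (ball x R))⁻¹ * (∫⁻ y in ball x R, ENNReal.ofReal |g y|) +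
          (volume (ball x R))⁻¹ * ∫⁻ y in ball x R, ENNReal.ofReal |h y| := by
        rw [lintegral_add_left hg.abs.ennreal_ofReal, mul_add]
    _ ≤ maxFn g x + maxFn h x :=
        add_le_add (le_iSup₂_of_le R hR le_rfl) (le_iSup₂_of_le R hR le_rfl)

theorem exists_mul_measure_ball_le_of_lt_maxFn {g : EuclideanSpace ℝ (Fin N) → ℝ} {t : ℝ≥0∞}
    {x : EuclideanSpace ℝ (Fin N)} (hx : t < maxFn g x) :
    ∃ R, 0 < R ∧ t * volume (ball x R) ≤ ∫⁻ y in ball x R, ENNReal.ofReal |g y| := by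
  obtain ⟨R, hx⟩ := lt_iSup_iff.1 hx
  obtain ⟨hR, hx⟩ := lt_iSup_iff.1 hx
  rw [mul_comm, ← div_eq_mul_inv, ENNReal.lt_div_iff_mul_lt
    (Or.inl (measure_ball_pos volume x hR).ne') (Or.inl measure_ball_lt_top.ne)] at hx
  exact ⟨R, hR, hx.le⟩

theorem mul_volume_lt_maxFn_le (hN : 1 ≤ N) (g : EuclideanSpace ℝ (Fin N) → ℝ) (t : ℝ≥0∞) :
    t * volume {x | t < maxFn g x} ≤ 4 ^ N * ∫⁻ y, ENNReal.ofReal |g y| := by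
  have : Nonempty (Fin N) := ⟨⟨0, hN⟩⟩
  set A := ∫⁻ y, ENNReal.ofReal |g y|
  rcases eq_or_ne A ∞ with hA | hA
  · rw [hA, ENNReal.mul_top (by positivity)]
    exact le_top
  rcases eq_or_ne t 0 with rfl | ht
  · rw [zero_mul]
    exact zero_le
  choose! r hr0 hr using fun x (hx : t < maxFn g x) => exists_mul_measure_ball_le_of_lt_maxFn hx
  obtain ⟨R, hR⟩ := exists_radius_le_of_measure_ball_le
    (volume : Measure (EuclideanSpace ℝ (Fin N))) (ENNReal.div_ne_top hA ht)
  have hrR : ∀ x ∈ {x | t < maxFn g x}, r x ≤ R := fun x hx => hR x _ (hr0 x hx) <| by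
    rw [ENNReal.le_div_iff_mul_le (Or.inl ht) (Or.inr hA), mul_comm]
    exact (hr x hx).trans (setLIntegral_le_lintegral _ _)
  have hvitali := mul_measure_le_of_forall_ball volume hr0 hrR hr
  rwa [finrank_euclideanSpace_fin] at hvitali

end MaximalFunction

section DyadicLevels

variable {N : ℕ} {g : EuclideanSpace ℝ (Fin N) → ℝ}

theorem setOf_two_mul_lt_maxFn_subset (hg : Measurable g) {l : ℝ} (hl : 0 ≤ l) :
    {x | ENNReal.ofReal (2 * l) < maxFn g x} ⊆
      {x | ENNReal.ofReal l < maxFn ({y | l < |g y|}.indicator g) x} := by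
  intro x hx
  by_contra! hbig
  set A := {y | l < |g y|}
  have hsmall : maxFn (Aᶜ.indicator g) x ≤ ENNReal.ofReal l := by
    refine maxFn_le_of_abs_le (fun y => ?_) x
    by_cases hy : l < |g y|
    · simpa [A, hy] using hl
    · simpa [A, hy] using not_lt.1 hy
  have hle : maxFn g x ≤ ENNReal.ofReal (2 * l) :=
    calc maxFn g x = maxFn (A.indicator g + Aᶜ.indicator g) x := by
          rw [Set.indicator_self_add_compl]
      _ ≤ ENNReal.ofReal l + ENNReal.ofReal l :=
          (maxFn_add_le (hg.indicator (measurableSet_lt measurable_const hg.abs)) _ x).trans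
            (add_le_add (not_lt.1 hbig) hsmall)
      _ = ENNReal.ofReal (2 * l) := by rw [← ENNReal.ofReal_add hl hl, two_mul]
  exact hx.not_ge hle

theorem rpow_mul_volume_two_mul_lt_maxFn_le (hN : 1 ≤ N) (hg : Measurable g) {l : ℝ} (hl : 0 < l)
    (γ : ℝ) :
    ENNReal.ofReal (l ^ γ) * volume {x | ENNReal.ofReal (2 * l) < maxFn g x} ≤
      4 ^ N * ENNReal.ofReal (l ^ (γ - 1)) *
        ∫⁻ y in {y | l < |g y|}, ENNReal.ofReal |g y| := by
  set A := {y | l < |g y|}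
  have hA : MeasurableSet A := measurableSet_lt measurable_const hg.abs
  have hint : ∫⁻ y, ENNReal.ofReal |A.indicator g y| = ∫⁻ y in A, ENNReal.ofReal |g y| := by
    rw [← lintegral_indicator hA]
    congr 1 with y
    by_cases hy : y ∈ A <;> simp [hy]
  calc ENNReal.ofReal (l ^ γ) * volume {x | ENNReal.ofReal (2 * l) < maxFn g x}
      = ENNReal.ofReal (l ^ (γ - 1)) *
          (ENNReal.ofReal l * volume {x | ENNReal.ofReal (2 * l) < maxFn g x}) := by
        rw [← mul_assoc, ← ENNReal.ofReal_mul (by positivity), ← Real.rpow_add_one hl.ne',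
          sub_add_cancel]
    _ ≤ ENNReal.ofReal (l ^ (γ - 1)) *
          (ENNReal.ofReal l * volume {x | ENNReal.ofReal l < maxFn (A.indicator g) x}) :=
        mul_le_mul_right
          (mul_le_mul_right (measure_mono (setOf_two_mul_lt_maxFn_subset hg hl.le)) _) _
    _ ≤ ENNReal.ofReal (l ^ (γ - 1)) * (4 ^ N * ∫⁻ y in A, ENNReal.ofReal |g y|) := by
        rw [← hint]
        exact mul_le_mul_right (mul_volume_lt_maxFn_le hN _ _) _
    _ = 4 ^ N * ENNReal.ofReal (l ^ (γ - 1)) * ∫⁻ y in A, ENNReal.ofReal |g y| := by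
        ring

theorem sum_rpow_mul_volume_two_mul_lt_maxFn_le (hN : 1 ≤ N) {γ : ℝ} (hγ : 1 < γ)
    (hg : Measurable g) (T : Finset ℕ) :
    ∑ k ∈ T, ENNReal.ofReal (((2 : ℝ) ^ k) ^ γ) *
        volume {x | ENNReal.ofReal (2 * 2 ^ k) < maxFn g x} ≤
      4 ^ N * ENNReal.ofReal (2 ^ (γ - 1) / (2 ^ (γ - 1) - 1)) *
        ∫⁻ y, ENNReal.ofReal |g y| ^ γ := by
  have hlevel : ∀ k : ℕ, Measurable fun y =>
      if (2 : ℝ) ^ k < |g y| then ENNReal.ofReal |g y| else 0 := fun k =>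
    Measurable.ite (measurableSet_lt measurable_const hg.abs) hg.abs.ennreal_ofReal
      measurable_const
  calc ∑ k ∈ T, ENNReal.ofReal (((2 : ℝ) ^ k) ^ γ) *
        volume {x | ENNReal.ofReal (2 * 2 ^ k) < maxFn g x}
      ≤ ∑ k ∈ T, 4 ^ N * (ENNReal.ofReal (((2 : ℝ) ^ k) ^ (γ - 1)) *
          ∫⁻ y in {y | (2 : ℝ) ^ k < |g y|}, ENNReal.ofReal |g y|) :=
        Finset.sum_le_sum fun k _ =>
          (rpow_mul_volume_two_mul_lt_maxFn_le hN hg (by positivity) γ).trans_eq (mul_assoc _ _ _)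
    _ = 4 ^ N * ∫⁻ y, ∑ k ∈ T, ENNReal.ofReal (((2 : ℝ) ^ k) ^ (γ - 1)) *
          (if (2 : ℝ) ^ k < |g y| then ENNReal.ofReal |g y| else 0) := by
        rw [← Finset.mul_sum, lintegral_finsetSum _ fun k _ => (hlevel k).const_mul _]
        refine congrArg _ (Finset.sum_congr rfl fun k _ => ?_)
        rw [lintegral_const_mul _ (hlevel k), ← lintegral_indicator
          (measurableSet_lt measurable_const hg.abs)]
        rfl
    _ ≤ 4 ^ N * ∫⁻ y, ENNReal.ofReal (2 ^ (γ - 1) / (2 ^ (γ - 1) - 1)) *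
          ENNReal.ofReal |g y| ^ γ := by
        gcongr with y
        exact sum_ofReal_two_pow_rpow_mul_ite_le hγ T (abs_nonneg _)
    _ = 4 ^ N * ENNReal.ofReal (2 ^ (γ - 1) / (2 ^ (γ - 1) - 1)) *
          ∫⁻ y, ENNReal.ofReal |g y| ^ γ := by
        rw [lintegral_const_mul _ (hg.abs.ennreal_ofReal.pow_const γ), mul_assoc]

theorem exists_mem_Ico_rpow_mul_volume_two_mul_lt_maxFn_le (hN : 1 ≤ N) {γ : ℝ} (hγ : 1 < γ)
    (hg : Measurable g) (j : ℕ) :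
    ∃ k ∈ Finset.Ico (2 ^ j) (2 ^ (j + 1)),
      ENNReal.ofReal (((2 : ℝ) ^ k) ^ γ) * volume {x | ENNReal.ofReal (2 * 2 ^ k) < maxFn g x} ≤
        ENNReal.ofReal (4 ^ N * (2 ^ (γ - 1) / (2 ^ (γ - 1) - 1)) * (2 : ℝ) ^ (-(j : ℝ))) *
          ∫⁻ y, ENNReal.ofReal |g y| ^ γ := by
  set c : ℝ := 4 ^ N * (2 ^ (γ - 1) / (2 ^ (γ - 1) - 1))
  set I := ∫⁻ y, ENNReal.ofReal |g y| ^ γ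
  have hq : (1 : ℝ) < 2 ^ (γ - 1) := Real.one_lt_rpow one_lt_two (by linarith)
  have hc : 0 ≤ c := mul_nonneg (by positivity) (div_pos (by linarith) (by linarith)).le
  have hcard : (Finset.Ico (2 ^ j) (2 ^ (j + 1))).card = 2 ^ j := by
    rw [Nat.card_Ico, pow_succ]
    omega
  -- `2 ^ j` copies of the claimed bound add up to the bound on the sum over all levels
  have hsum : ∑ _k ∈ Finset.Ico (2 ^ j) (2 ^ (j + 1)),
      ENNReal.ofReal (c * (2 : ℝ) ^ (-(j : ℝ))) * I = ENNReal.ofReal c * I := by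
    rw [Finset.sum_const, hcard, nsmul_eq_mul, ← mul_assoc, ← ENNReal.ofReal_natCast,
      ← ENNReal.ofReal_mul (by positivity), Real.rpow_neg zero_le_two, Real.rpow_natCast,
      Nat.cast_pow, Nat.cast_ofNat, mul_left_comm, mul_inv_cancel₀ (by positivity), mul_one]
  refine ENNReal.exists_le_of_sum_le (Finset.nonempty_Ico.2 ?_) ?_
  · exact Nat.pow_lt_pow_right one_lt_two (Nat.lt_succ_self j)
  · rw [hsum, ENNReal.ofReal_mul (by positivity), ENNReal.ofReal_pow zero_le_four,
      ENNReal.ofReal_ofNat]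
    exact sum_rpow_mul_volume_two_mul_lt_maxFn_le hN hγ hg _

end DyadicLevels

/-- There is a constant `C = C(N, γ)` such that for every `f ∈ L^γ(ℝ^N)` and every `j`
there is `λ ∈ [2^(2^j), 2^(2^(j+1)))` with
`λ^γ L_N({M(|f|) > 2λ}) ≤ C 2^{-j} ∫ |f|^γ`. -/
theorem maximal_function_dyadic_level_selection
    (N : ℕ) (hN : 1 ≤ N) (γ : ℝ) (hγ : 1 < γ) :
    ∃ C : ℝ, 0 < C ∧
      ∀ f : EuclideanSpace ℝ (Fin N) → ℝ,
        MemLp f (ENNReal.ofReal γ) volume →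
        ∀ j : ℕ, ∃ lam : ℝ,
          (2 : ℝ) ^ (2 ^ j) ≤ lam ∧ lam < (2 : ℝ) ^ (2 ^ (j + 1)) ∧
          ENNReal.ofReal (lam ^ γ) *
              volume {x | ENNReal.ofReal (2 * lam) < maxFn f x} ≤
            ENNReal.ofReal (C * (2 : ℝ) ^ (-(j : ℝ))) *
              ∫⁻ x, ENNReal.ofReal |f x| ^ γ := by
  have hq : (1 : ℝ) < 2 ^ (γ - 1) := Real.one_lt_rpow one_lt_two (by linarith)
  refine ⟨4 ^ N * (2 ^ (γ - 1) / (2 ^ (γ - 1) - 1)),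
    mul_pos (by positivity) (div_pos (by linarith) (by linarith)), fun f hf j => ?_⟩
  obtain ⟨g, hg, hfg⟩ := hf.aestronglyMeasurable.aemeasurable
  obtain ⟨k, hk, hle⟩ := exists_mem_Ico_rpow_mul_volume_two_mul_lt_maxFn_le hN hγ hg j
  rw [Finset.mem_Ico] at hk
  refine ⟨2 ^ k, pow_le_pow_right₀ one_le_two hk.1, pow_lt_pow_right₀ one_lt_two hk.2, ?_⟩
  rw [maxFn_congr_ae hfg, lintegral_congr_ae (hfg.mono fun y hy => by rw [hy])]
  exact hle
end

section
/- Let d ≥ 1 and let S : ℝ^d → ℝ^d be continuous and strictly monotone, i.e. ⟨S(A) − S(B), A − B⟩ > 0 for all A ≠ B in ℝ^d. If a ∈ ℝ^d and (a_m) is a sequence in ℝ^d such that ⟨S(a_m) − S(a), a_m − a⟩ → 0 as m → ∞, then a_m → a as m → ∞. -/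
open Filter
open scoped RealInnerProductSpace

/-- Dal Maso–Murat / Lions lemma: if `S : ℝ^d → ℝ^d` is continuous and strictly monotone
and `⟨S(a_m) − S(a), a_m − a⟩ → 0`, then `a_m → a`. -/
theorem strictly_monotone_limit
    (d : ℕ) (hd : 1 ≤ d)
    (S : EuclideanSpace ℝ (Fin d) → EuclideanSpace ℝ (Fin d))
    (hS : Continuous S)
    (hmono : ∀ A B : EuclideanSpace ℝ (Fin d), A ≠ B → 0 < ⟪S A - S B, A - B⟫)
    (a : EuclideanSpace ℝ (Fin d)) (as : ℕ → EuclideanSpace ℝ (Fin d))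
    (hconv : Tendsto (fun m => ⟪S (as m) - S a, as m - a⟫) atTop (nhds 0)) :
    Tendsto as atTop (nhds a) := by
  rw [Metric.tendsto_atTop]
  intro ε hε
  set K := Metric.sphere (0 : EuclideanSpace ℝ (Fin d)) 1 with hK
  have hKc : IsCompact K := isCompact_sphere 0 1
  have hKne : K.Nonempty := by
    refine ⟨EuclideanSpace.single ⟨0, hd⟩ (1 : ℝ), ?_⟩
    rw [hK, mem_sphere_zero_iff_norm, EuclideanSpace.norm_single]
    norm_num
  set f : EuclideanSpace ℝ (Fin d) → ℝ := fun w => ⟪S (a + ε • w) - S a, w⟫ with hf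
  have hfc : Continuous f := by
    have h1 : Continuous fun w : EuclideanSpace ℝ (Fin d) => a + ε • w := continuous_const.add (continuous_id.const_smul ε)
    exact ((hS.comp h1).sub continuous_const).inner continuous_id
  obtain ⟨w₀, hw₀K, hmin⟩ := hKc.exists_isMinOn hKne hfc.continuousOn
  set δ := f w₀ with hδdef
  have hδ : 0 < δ := by
    have hne : a + ε • w₀ ≠ a := by
      intro h
      have h0 : ε • w₀ = 0 := by
        have := congrArg (· - a) h
        simpa [add_sub_cancel_left] using this
      have hw1 : ‖w₀‖ = 1 := mem_sphere_zero_iff_norm.mp hw₀K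
      rcases smul_eq_zero.mp h0 with h' | h'
      · exact hε.ne' h'
      · rw [h'] at hw1; simp at hw1
    have h0 := hmono _ _ hne
    have heq : (a + ε • w₀) - a = ε • w₀ := by abel
    rw [heq, real_inner_smul_right] at h0
    show 0 < f w₀
    simp only [hf]
    nlinarith [h0, hε]
  have hev := Metric.tendsto_atTop.mp hconv (ε * δ) (by positivity)
  obtain ⟨N, hN⟩ := hev
  refine ⟨N, fun m hm => ?_⟩
  by_contra hcon
  push_neg at hcon
  rw [dist_eq_norm] at hcon
  set lm := ‖as m - a‖ with hlm
  have hεlm : ε ≤ lm := hcon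
  have hlm0 : 0 < lm := lt_of_lt_of_le hε hεlm
  set w : EuclideanSpace ℝ (Fin d) := lm⁻¹ • (as m - a) with hw
  have hwnorm : ‖w‖ = 1 := by
    rw [hw, norm_smul, norm_inv, Real.norm_eq_abs, abs_of_pos hlm0, ← hlm,
      inv_mul_cancel₀ hlm0.ne']
  have hwK : w ∈ K := by
    rw [hK, mem_sphere_zero_iff_norm]; exact hwnorm
  have hasm : as m - a = lm • w := by
    rw [hw, smul_smul, mul_inv_cancel₀ hlm0.ne', one_smul]
  have hkey : 0 ≤ ⟪S (as m) - S (a + ε • w), w⟫ := by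
    rcases eq_or_lt_of_le hεlm with h | h
    · have heq3 : as m = a + ε • w := by
        have h2 : as m = a + lm • w := by
          rw [← hasm]; abel
        rw [h2, ← h]
      rw [heq3]; simp
    · have hmono' : 0 ≤ ⟪S (as m) - S (a + ε • w), as m - (a + ε • w)⟫ := by
        by_cases hAB : as m = a + ε • w
        · rw [hAB]; simp
        · exact (hmono _ _ hAB).le
      have heq2 : as m - (a + ε • w) = (lm - ε) • w := by
        have h3 : as m - (a + ε • w) = (as m - a) - ε • w := by abel
        rw [h3, hasm, ← sub_smul]
      rw [heq2, real_inner_smul_right] at hmono'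
      nlinarith [hmono', sub_pos.mpr h]
  have hfw : f w ≤ ⟪S (as m) - S a, w⟫ := by
    have h4 : ⟪S (as m) - S a, w⟫ - f w = ⟪S (as m) - S (a + ε • w), w⟫ := by
      simp only [hf]
      rw [← inner_sub_left]
      congr 1
      abel
    linarith [hkey, h4.ge, h4.le]
  have hδfw : δ ≤ f w := hmin hwK
  have hlow : ε * δ ≤ ⟪S (as m) - S a, as m - a⟫ := by
    rw [hasm, real_inner_smul_right]
    have h1 : δ ≤ ⟪S (as m) - S a, w⟫ := le_trans hδfw hfw
    calc ε * δ ≤ lm * δ := by nlinarith [hεlm, hδ]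
      _ ≤ lm * ⟪S (as m) - S a, w⟫ := by nlinarith [h1, hlm0]
  have h5 := hN m hm
  rw [Real.dist_eq, sub_zero] at h5
  have h6 := le_abs_self (⟪S (as m) - S a, as m - a⟫ : ℝ)
  linarith [hlow, h5, h6, (abs_lt.mp h5).2]
end
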